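/- arXiv:2004.08816 — 9 statements merged into one kernel-verified Lean document; each statement's English description precedes it below -/
import Mathlib

section
/- Let λ_n, κ_n, δ_n, μ_n, ν_n, β_n (n ∈ ℕ) be strictly positive reals, Λ_n = λ_n + κ_n, M_n = μ_n + ν_n, and define x(n,b), x(n,d) by the explicit product formulas x(n,b) = β_0 M_{n+1} (∏_{k=1}^{n}(Λ_{k-1}β_k + M_k λ_{k-1}))/(∏_{k=0}^{n}(Λ_k μ_{k+1} + M_{k+1} δ_k)) for n ≥ 0, x(0,d)=1, x(n,d) = β_0 Λ_{n-1} (∏_{k=1}^{n-1}(Λ_{k-1}β_k + M_k λ_{k-1}))/(∏_{k=0}^{n-1}(Λ_k μ_{k+1} + M_{k+1} δ_k)) for n ≥ 1. Then these values satisfy the global balance equations: x(0,b)(λ_0+κ_0+δ_0) = x(1,d)ν_1 + x(0,d)β_0; x(0,d)β_0 = x(1,d)μ_1 + x(0,b)δ_0; and for all n ≥ 1, x(n,b)(λ_n+κ_n+δ_n) = x(n-1,b)λ_{n-1} + x(n+1,d)ν_{n+1} + x(n,d)β_n and x(n,d)(μ_n+ν_n+β_n) = x(n+1,d)μ_{n+1}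 + x(n-1,b)κ_{n-1} + x(n,b)δ_n. -/
open Finset

theorem stmt_1 (lam kap del mu nu bet : ℕ → ℝ)
    (hlam : ∀ n, 0 < lam n) (hkap : ∀ n, 0 < kap n) (hdel : ∀ n, 0 < del n)
    (hmu : ∀ n, 0 < mu n) (hnu : ∀ n, 0 < nu n) (hbet : ∀ n, 0 < bet n)
    (L M : ℕ → ℝ)
    (hL : ∀ n, L n = lam n + kap n) (hM : ∀ n, M n = mu n + nu n)
    (xb xd : ℕ → ℝ)
    (hxb : ∀ n, xb n = bet 0 * M (n + 1) *
      (∏ k ∈ Icc 1 n, (L (k - 1) * bet k + M k * lam (k - 1))) /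
      (∏ k ∈ Icc 0 n, (L k * mu (k + 1) + M (k + 1) * del k)))
    (hxd0 : xd 0 = 1)
    (hxd : ∀ n, 1 ≤ n → xd n = bet 0 * L (n - 1) *
      (∏ k ∈ Icc 1 (n - 1), (L (k - 1) * bet k + M k * lam (k - 1))) /
      (∏ k ∈ Icc 0 (n - 1), (L k * mu (k + 1) + M (k + 1) * del k))) :
    (xb 0 * (lam 0 + kap 0 + del 0) = xd 1 * nu 1 + xd 0 * bet 0) ∧
    (xd 0 * bet 0 = xd 1 * mu 1 + xb 0 * del 0) ∧
    (∀ n, 1 ≤ n →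
      xb n * (lam n + kap n + del n)
        = xb (n - 1) * lam (n - 1) + xd (n + 1) * nu (n + 1) + xd n * bet n ∧
      xd n * (mu n + nu n + bet n)
        = xd (n + 1) * mu (n + 1) + xb (n - 1) * kap (n - 1) + xb n * del n) := by
  have hLpos : ∀ n, 0 < L n := by intro n; rw [hL]; exact add_pos (hlam n) (hkap n)
  have hMpos : ∀ n, 0 < M n := by intro n; rw [hM]; exact add_pos (hmu n) (hnu n)
  have hBpos : ∀ k, 0 < L k * mu (k + 1) + M (k + 1) * del k := fun k =>
    add_pos (mul_pos (hLpos k) (hmu (k + 1))) (mul_pos (hMpos (k + 1)) (hdel k))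
  have hQpos : ∀ m, 0 < ∏ k ∈ Icc 0 m, (L k * mu (k + 1) + M (k + 1) * del k) := fun m =>
    Finset.prod_pos fun k _ => hBpos k
  have hQne : ∀ m, (∏ k ∈ Icc 0 m, (L k * mu (k + 1) + M (k + 1) * del k)) ≠ 0 :=
    fun m => (hQpos m).ne'
  have hPsucc : ∀ m : ℕ, (∏ k ∈ Icc 1 (m + 1), (L (k - 1) * bet k + M k * lam (k - 1)))
      = (∏ k ∈ Icc 1 m, (L (k - 1) * bet k + M k * lam (k - 1))) *
        (L m * bet (m + 1) + M (m + 1) * lam m) := by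
    intro m
    rw [Finset.prod_Icc_succ_top (by omega)]
    simp
  have hQsucc : ∀ m : ℕ, (∏ k ∈ Icc 0 (m + 1), (L k * mu (k + 1) + M (k + 1) * del k))
      = (∏ k ∈ Icc 0 m, (L k * mu (k + 1) + M (k + 1) * del k)) *
        (L (m + 1) * mu (m + 2) + M (m + 2) * del (m + 1)) := by
    intro m
    rw [Finset.prod_Icc_succ_top (by omega)]
  refine ⟨?_, ?_, ?_⟩
  · rw [hxb 0, hxd 1 le_rfl, hxd0]
    simp only [Nat.sub_self, Icc_self]
    rw [show Icc 1 0 = (∅ : Finset ℕ) by simp]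
    simp only [Finset.prod_empty, Finset.prod_singleton]
    have h0 := hBpos 0
    field_simp
    rw [hL 0, hM 1]
    ring
  · rw [hxb 0, hxd 1 le_rfl, hxd0]
    simp only [Nat.sub_self, Icc_self]
    rw [show Icc 1 0 = (∅ : Finset ℕ) by simp]
    simp only [Finset.prod_empty, Finset.prod_singleton]
    have h0 := hBpos 0
    field_simp
  · intro n hn
    obtain ⟨m, rfl⟩ := Nat.exists_eq_succ_of_ne_zero (by omega : n ≠ 0)
    simp only [Nat.succ_eq_add_one]
    simp only [show m + 1 - 1 = m from by omega, show m + 1 + 1 = m + 2 from by omega]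
    rw [hxb (m + 1), hxb m, hxd (m + 1) (by omega), hxd (m + 2) (by omega)]
    simp only [show m + 1 - 1 = m from by omega, show m + 2 - 1 = m + 1 from by omega]
    rw [hPsucc m, hQsucc m]
    have hQm := hQne m
    have hBm := (hBpos (m + 1)).ne'
    constructor
    · field_simp
      rw [hL m, hL (m + 1), hM (m + 1), hM (m + 2)]
      ring
    · field_simp
      rw [hL m, hL (m + 1), hM (m + 1), hM (m + 2)]
      ring
end

section
/- Let λ, δ, β, θ > 0 with θ > λ and λ/δ < (θ-λ)/β. Set r = λ(β+θ-λ)/((θ-λ)(λ+δ)) and define π(0,d) > 0 arbitrary, π(n,d) = π(0,d)·(βλ/((λ+δ)(θ-λ)))·r^{n-1} for n ≥ 1, π(n,b) = π(0,d)·(β/(λ+δ))·r^{n} for n ≥ 0. Then π satisfies the global balance equations of the dam process: π(0,b)(λ+δ) = π(0,d)β; π(0,d)β = π(1,d)(θ-λ) + π(0,b)δ; for n ≥ 1: π(n,b)(λ+δ) = π(n-1,b)λ + π(n,d)β and π(n,d)(θ-λ+β) = π(n+1,d)(θ-λ) + π(n,b)δ. -/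
/-! The candidate is geometric in the level: `π(n,b) = c rⁿ` and `π(n+1,d) = c (λ/μ) rⁿ` with
`μ = θ - λ`. Dividing out `c rⁿ`, both balance equations at a level `n ≥ 1` collapse to the single
relation `r (λ + δ) μ = λ (μ + β)` defining `r`, and the boundary equations to
`c (λ + δ) = π(0,d) β`. -/

section GeometricBalance

variable {K : Type*} [Field K] {lam del bet mu r : K}

theorem dam_ratio_relation (hmu : mu ≠ 0) (hld : lam + del ≠ 0)
    (hr : r = lam * (bet + mu) / (mu * (lam + del))) :
    r * (lam + del) * mu = lam * (mu + bet) := by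
  rw [hr]
  field_simp
  ring

theorem geometric_balance_b (hmu : mu ≠ 0) (hrel : r * (lam + del) * mu = lam * (mu + bet))
    (c : K) (n : ℕ) :
    c * r ^ (n + 1) * (lam + del) = c * r ^ n * lam + c * (lam / mu) * r ^ n * bet := by
  field_simp
  linear_combination c * r ^ n * hrel

theorem geometric_balance_d (hmu : mu ≠ 0) (hrel : r * (lam + del) * mu = lam * (mu + bet))
    (c : K) (n : ℕ) :
    c * (lam / mu) * r ^ n * (mu + bet) =
      c * (lam / mu) * r ^ (n + 1) * mu + c * r ^ (n + 1) * del := by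
  field_simp
  linear_combination -(c * r ^ n * hrel)

end GeometricBalance

theorem stmt_5_general (lam del bet th : ℝ)
    (hlam : 0 < lam) (hdel : 0 < del)
    (hthlam : lam < th)
    (r : ℝ) (hr : r = lam * (bet + th - lam) / ((th - lam) * (lam + del)))
    (pib pid : ℕ → ℝ)
    (hpid : ∀ n, 1 ≤ n →
      pid n = pid 0 * (bet * lam / ((lam + del) * (th - lam))) * r ^ (n - 1))
    (hpib : ∀ n, pib n = pid 0 * (bet / (lam + del)) * r ^ n) :
    (pib 0 * (lam + del) = pid 0 * bet) ∧
    (pid 0 * bet = pid 1 * (th - lam) + pib 0 * del) ∧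
    (∀ n, 1 ≤ n →
      pib n * (lam + del) = pib (n - 1) * lam + pid n * bet ∧
      pid n * (th - lam + bet) = pid (n + 1) * (th - lam) + pib n * del) := by
  have hmu : th - lam ≠ 0 := (sub_pos.mpr hthlam).ne'
  have hld : lam + del ≠ 0 := (add_pos hlam hdel).ne'
  have hrel := dam_ratio_relation (bet := bet) (r := r) hmu hld (by rw [hr]; ring)
  set c := pid 0 * (bet / (lam + del))
  have hpid_succ (n : ℕ) : pid (n + 1) = c * (lam / (th - lam)) * r ^ n := by
    rw [hpid (n + 1) n.succ_pos, Nat.add_sub_cancel, mul_comm bet lam, ← div_mul_div_comm]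
    ring
  have hc : c * (lam + del) = pid 0 * bet := by
    simp only [c]
    field_simp
  refine ⟨by rw [hpib, pow_zero, mul_one, hc], ?_, ?_⟩
  · rw [hpid_succ, hpib, ← hc]
    field_simp
  · rintro n hn
    obtain ⟨m, rfl⟩ := Nat.exists_eq_add_of_le' hn
    rw [Nat.add_sub_cancel, hpib, hpib, hpid_succ, hpid_succ]
    exact ⟨geometric_balance_b hmu hrel c m, geometric_balance_d hmu hrel c m⟩

theorem stmt_5 (lam del bet th : ℝ)
    (hlam : 0 < lam) (hdel : 0 < del) (hbet : 0 < bet) (hth : 0 < th)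
    (hthlam : lam < th)
    (hstab : lam / del < (th - lam) / bet)
    (r : ℝ) (hr : r = lam * (bet + th - lam) / ((th - lam) * (lam + del)))
    (pib pid : ℕ → ℝ) (hpid0 : 0 < pid 0)
    (hpid : ∀ n, 1 ≤ n →
      pid n = pid 0 * (bet * lam / ((lam + del) * (th - lam))) * r ^ (n - 1))
    (hpib : ∀ n, pib n = pid 0 * (bet / (lam + del)) * r ^ n) :
    (pib 0 * (lam + del) = pid 0 * bet) ∧
    (pid 0 * bet = pid 1 * (th - lam) + pib 0 * del) ∧
    (∀ n, 1 ≤ n →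
      pib n * (lam + del) = pib (n - 1) * lam + pid n * bet ∧
      pid n * (th - lam + bet) = pid (n + 1) * (th - lam) + pib n * del) :=
  stmt_5_general lam del bet th hlam hdel hthlam r hr pib pid hpid hpib
end

section
/- Let λ_n (n ≥ 0), δ_n (n ≥ 0), β_n (n ≥ 0), ν_n (n ≥ 1) be strictly positive reals and set κ_n = μ_n = 0 in the alternating birth-death model. Define x(0,d) > 0, x(n,b) = x(0,d)·(β_0/δ_0)·(∏_{k=1}^{n} λ_{k-1}/δ_k)·(∏_{k=1}^{n} (β_k+ν_k)/ν_k) for n ≥ 0, and x(n,d) = x(0,d)·(β_0/δ_0)·(∏_{k=1}^{n-1} λ_{k-1}/δ_k)·(∏_{k=1}^{n-1} (β_k+ν_k)/ν_k)·(λ_{n-1}/ν_n) for n ≥ 1. Then x satisfies the global balance equations of the retrial-queue process: x(0,b)(λ_0+δ_0) = x(1,d)ν_1 + x(0,d)β_0; x(0,d)β_0 = x(0,b)δ_0; for n ≥ 1: x(n,b)(λ_n+δ_n) = x(n-1,b)λ_{n-1} + x(n+1,d)ν_{n+1} + x(n,d)β_n and x(n,d)(ν_n+β_n) = x(n,b)δ_n.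 -/
open Finset

theorem stmt_6 (lam del bet nu : ℕ → ℝ)
    (hlam : ∀ n, 0 < lam n) (hdel : ∀ n, 0 < del n) (hbet : ∀ n, 0 < bet n)
    (hnu : ∀ n, 1 ≤ n → 0 < nu n)
    (x0d : ℝ) (hx0d : 0 < x0d)
    (xb xd : ℕ → ℝ)
    (hxb : ∀ n, xb n = x0d * (bet 0 / del 0) *
      (∏ k ∈ Icc 1 n, lam (k - 1) / del k) *
      (∏ k ∈ Icc 1 n, (bet k + nu k) / nu k))
    (hxd0 : xd 0 = x0d)
    (hxd : ∀ n, 1 ≤ n → xd n = x0d * (bet 0 / del 0) *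
      (∏ k ∈ Icc 1 (n - 1), lam (k - 1) / del k) *
      (∏ k ∈ Icc 1 (n - 1), (bet k + nu k) / nu k) *
      (lam (n - 1) / nu n)) :
    (xb 0 * (lam 0 + del 0) = xd 1 * nu 1 + xd 0 * bet 0) ∧
    (xd 0 * bet 0 = xb 0 * del 0) ∧
    (∀ n, 1 ≤ n →
      xb n * (lam n + del n)
        = xb (n - 1) * lam (n - 1) + xd (n + 1) * nu (n + 1) + xd n * bet n ∧
      xd n * (nu n + bet n) = xb n * del n) := by
  have hnu' : ∀ n : ℕ, nu (n + 1) ≠ 0 := fun n => (hnu (n + 1) (Nat.le_add_left 1 n)).ne'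
  have hdel' : ∀ n, del n ≠ 0 := fun n => (hdel n).ne'
  have hP : ∀ n : ℕ, (∏ k ∈ Icc 1 (n + 1), lam (k - 1) / del k)
      = (∏ k ∈ Icc 1 n, lam (k - 1) / del k) * (lam n / del (n + 1)) := by
    intro n
    rw [Finset.prod_Icc_succ_top (Nat.le_add_left 1 n)]
    simp
  have hQ : ∀ n : ℕ, (∏ k ∈ Icc 1 (n + 1), (bet k + nu k) / nu k)
      = (∏ k ∈ Icc 1 n, (bet k + nu k) / nu k) * ((bet (n + 1) + nu (n + 1)) / nu (n + 1)) := by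
    intro n
    rw [Finset.prod_Icc_succ_top (Nat.le_add_left 1 n)]
  have hxb0 : xb 0 * del 0 = x0d * bet 0 := by
    rw [hxb 0]
    simp
    have := hdel' 0
    field_simp
  have key1 : ∀ n : ℕ, xd (n + 1) * nu (n + 1) = xb n * lam n := by
    intro n
    rw [hxd (n + 1) (Nat.le_add_left 1 n), hxb n]
    simp only [Nat.add_sub_cancel]
    generalize (∏ k ∈ Icc 1 n, lam (k - 1) / del k) = P
    generalize (∏ k ∈ Icc 1 n, (bet k + nu k) / nu k) = Q
    have h1 := hnu' n
    have h2 := hdel' 0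
    field_simp
  have key2 : ∀ n : ℕ, xd (n + 1) * (nu (n + 1) + bet (n + 1)) = xb (n + 1) * del (n + 1) := by
    intro n
    rw [hxd (n + 1) (Nat.le_add_left 1 n), hxb (n + 1), hP n, hQ n]
    simp only [Nat.add_sub_cancel]
    generalize (∏ k ∈ Icc 1 n, lam (k - 1) / del k) = P
    generalize (∏ k ∈ Icc 1 n, (bet k + nu k) / nu k) = Q
    have h1 := hnu' n
    have h2 := hdel' 0
    have h3 := hdel' (n + 1)
    field_simp
    ring
  refine ⟨?_, ?_, ?_⟩
  · rw [hxd0]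
    linear_combination hxb0 - key1 0
  · rw [hxd0]
    linear_combination -hxb0
  · intro n hn
    obtain ⟨m, rfl⟩ : ∃ m, n = m + 1 := ⟨n - 1, (Nat.succ_pred_eq_of_pos hn).symm⟩
    simp only [Nat.add_sub_cancel]
    exact ⟨by linear_combination key1 m - key1 (m + 1) - key2 m, key2 m⟩
end

section
/- Let λ_n, κ_n, δ_n, μ_n, ν_n, β_n > 0 for all n ∈ ℤ, Λ_n = λ_n+κ_n, M_n = μ_n+ν_n. Define x(0,b) > 0 and x(n,b) = x(0,b)·(M_{n+1}/M_1)·∏_{k=1}^{n}(Λ_{k-1}β_k+M_kλ_{k-1})/(Λ_kμ_{k+1}+M_{k+1}δ_k) for n > 0, x(-n,b) = x(0,b)·(M_{-n+1}/M_1)·∏_{k=-n}^{-1}(Λ_{k+1}μ_{k+2}+M_{k+2}δ_{k+1})/(Λ_kβ_{k+1}+M_{k+1}λ_k) for n ≥ 0, x(n,d) = x(n-1,b)·Λ_{n-1}/M_n for all n ∈ ℤ. Then for all n ∈ ℤ the global balance equations hold: x(n,b)(λ_n+κ_n+δ_n) = x(n-1,b)λ_{n-1} + x(n+1,d)ν_{n+1}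 + x(n,d)β_n and x(n,d)(μ_n+ν_n+β_n) = x(n+1,d)μ_{n+1} + x(n-1,b)κ_{n-1} + x(n,b)δ_n. -/
open Finset

theorem stmt_8 (lam kap del mu nu bet : ℤ → ℝ)
    (hlam : ∀ n, 0 < lam n) (hkap : ∀ n, 0 < kap n) (hdel : ∀ n, 0 < del n)
    (hmu : ∀ n, 0 < mu n) (hnu : ∀ n, 0 < nu n) (hbet : ∀ n, 0 < bet n)
    (L M : ℤ → ℝ)
    (hL : ∀ n, L n = lam n + kap n) (hM : ∀ n, M n = mu n + nu n)
    (xb xd : ℤ → ℝ) (hxb0 : 0 < xb 0)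
    (hxbpos : ∀ n : ℤ, 0 < n → xb n = xb 0 * (M (n + 1) / M 1) *
      ∏ k ∈ Icc (1 : ℤ) n,
        (L (k - 1) * bet k + M k * lam (k - 1)) /
        (L k * mu (k + 1) + M (k + 1) * del k))
    (hxbneg : ∀ n : ℕ, xb (-(n : ℤ)) = xb 0 * (M (-(n : ℤ) + 1) / M 1) *
      ∏ k ∈ Icc (-(n : ℤ)) (-1 : ℤ),
        (L (k + 1) * mu (k + 2) + M (k + 2) * del (k + 1)) /
        (L k * bet (k + 1) + M (k + 1) * lam k))
    (hxd : ∀ n : ℤ, xd n = xb (n - 1) * L (n - 1) / M n) :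
    ∀ n : ℤ,
      xb n * (lam n + kap n + del n)
        = xb (n - 1) * lam (n - 1) + xd (n + 1) * nu (n + 1) + xd n * bet n ∧
      xd n * (mu n + nu n + bet n)
        = xd (n + 1) * mu (n + 1) + xb (n - 1) * kap (n - 1) + xb n * del n := by
  have hLpos : ∀ n, 0 < L n := fun n => by rw [hL]; exact add_pos (hlam n) (hkap n)
  have hMpos : ∀ n, 0 < M n := fun n => by rw [hM]; exact add_pos (hmu n) (hnu n)
  have hM0 : ∀ n, M n ≠ 0 := fun n => (hMpos n).ne'
  have hD : ∀ m : ℤ, L m * mu (m + 1) + M (m + 1) * del m ≠ 0 := fun m =>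
    (add_pos (mul_pos (hLpos m) (hmu (m+1))) (mul_pos (hMpos (m+1)) (hdel m))).ne'
  have hN : ∀ m : ℤ, L m * bet (m + 1) + M (m + 1) * lam m ≠ 0 := fun m =>
    (add_pos (mul_pos (hLpos m) (hbet (m+1))) (mul_pos (hMpos (m+1)) (hlam m))).ne'
  -- formula valid for all m ≥ 0
  have hpos : ∀ m : ℤ, 0 ≤ m → xb m = xb 0 * (M (m + 1) / M 1) *
      ∏ k ∈ Icc (1 : ℤ) m,
        (L (k - 1) * bet k + M k * lam (k - 1)) /
        (L k * mu (k + 1) + M (k + 1) * del k) := by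
    intro m hm
    rcases eq_or_lt_of_le hm with h | h
    · subst h
      simp [div_self (hM0 1)]
    · exact hxbpos m h
  have hneg : ∀ m : ℤ, m ≤ 0 → xb m = xb 0 * (M (m + 1) / M 1) *
      ∏ k ∈ Icc m (-1 : ℤ),
        (L (k + 1) * mu (k + 2) + M (k + 2) * del (k + 1)) /
        (L k * bet (k + 1) + M (k + 1) * lam k) := by
    intro m hm
    have := hxbneg (-m).toNat
    rwa [Int.toNat_of_nonneg (by omega), neg_neg] at this
  -- key recurrence
  have key : ∀ m : ℤ, xb (m + 1) * (L (m + 1) * mu (m + 2) + M (m + 2) * del (m + 1)) * M (m + 1)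
      = xb m * (L m * bet (m + 1) + M (m + 1) * lam m) * M (m + 2) := by
    intro m
    rcases le_or_gt 0 m with hm | hm
    · rw [hpos m hm, hpos (m+1) (by omega)]
      have hsplit : Icc (1 : ℤ) (m + 1) = insert (m + 1) (Icc (1 : ℤ) m) := by
        ext x; simp [Finset.mem_Icc]; omega
      rw [hsplit, Finset.prod_insert (by simp)]
      have e1 : m + 1 - 1 = m := by ring
      have e2 : m + 1 + 1 = m + 2 := by ring
      rw [e1, e2]
      set p := ∏ k ∈ Icc (1 : ℤ) m,
        (L (k - 1) * bet k + M k * lam (k - 1)) /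
        (L k * mu (k + 1) + M (k + 1) * del k) with hp
      have hd : L (m + 1) * mu (m + 2) + M (m + 2) * del (m + 1) ≠ 0 := by have := hD (m + 1); rwa [show m + 1 + 1 = m + 2 by ring] at this
      set d := L (m + 1) * mu (m + 2) + M (m + 2) * del (m + 1) with hdd
      field_simp [hM0 1, hd]
    · rw [hneg m (by omega), hneg (m+1) (by omega)]
      have hsplit : Icc m (-1 : ℤ) = insert m (Icc (m + 1) (-1 : ℤ)) := by
        ext x; simp [Finset.mem_Icc]; omega
      rw [hsplit, Finset.prod_insert (by simp)]
      have e2 : m + 1 + 1 = m + 2 := by ring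
      rw [e2]
      set p := ∏ k ∈ Icc (m + 1) (-1 : ℤ),
        (L (k + 1) * mu (k + 2) + M (k + 2) * del (k + 1)) /
        (L k * bet (k + 1) + M (k + 1) * lam k) with hp
      have ha : L m * bet (m + 1) + M (m + 1) * lam m ≠ 0 := hN m
      set a := L m * bet (m + 1) + M (m + 1) * lam m with haa
      field_simp [hM0 1, ha]
    
  intro n
  have A := key (n - 1)
  have e1 : n - 1 + 1 = n := by ring
  have e2 : n - 1 + 2 = n + 1 := by ring
  rw [e1, e2] at A
  have hxd1 : xd (n + 1) = xb n * L n / M (n + 1) := by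
    rw [hxd (n + 1)]; norm_num
  have hxdn : xd n = xb (n - 1) * L (n - 1) / M n := hxd n
  rw [hxd1, hxdn]
  rw [hL n, hL (n-1), hM n, hM (n+1)] at A ⊢
  have h1 : mu n + nu n ≠ 0 := (add_pos (hmu n) (hnu n)).ne'
  have h2 : mu (n + 1) + nu (n + 1) ≠ 0 := (add_pos (hmu (n+1)) (hnu (n+1))).ne'
  constructor
  · field_simp [h1, h2]
    linear_combination A
  · field_simp [h1, h2]
    linear_combination -A
end

section
/- Let λ_n, κ_n, δ_n, μ_n, ν_n, β_n > 0 (with μ_0 = ν_0 = 0), and set Λ⁺_n = 1+λ_n+κ_n+δ_n, M⁺_n = 1+μ_n+ν_n+β_n. Suppose (y(n,b), y(n,d))_{n≥0} are strictly positive reals satisfying: y(0,d)(1+β_0) = y(0,b)β_0; and for n ≥ 0, y(n,b)Λ⁺_n = y(n,d)δ_n + y(n+1,b)λ_n + y(n+1,d)κ_n and y(n+1,d)M⁺_{n+1} = y(n+1,b)β_{n+1} + y(n,d)μ_{n+1} + y(n,b)ν_{n+1}. Then for all n ≥ 0: y(n,b) > y(n,d) and y(n+1,b) > y(n,b). In particular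 (y(n,b))_{n≥0} is strictly increasing. -/
theorem stmt_12 (lam kap del mu nu bet : ℕ → ℝ)
    (hlam : ∀ n, 0 < lam n) (hkap : ∀ n, 0 < kap n) (hdel : ∀ n, 0 < del n)
    (hmu : ∀ n, 1 ≤ n → 0 < mu n) (hmu0 : mu 0 = 0)
    (hnu : ∀ n, 1 ≤ n → 0 < nu n) (hnu0 : nu 0 = 0)
    (hbet : ∀ n, 0 < bet n)
    (Lp Mp : ℕ → ℝ)
    (hLp : ∀ n, Lp n = 1 + lam n + kap n + del n)
    (hMp : ∀ n, Mp n = 1 + mu n + nu n + bet n)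
    (yb yd : ℕ → ℝ)
    (hybpos : ∀ n, 0 < yb n) (hydpos : ∀ n, 0 < yd n)
    (h0 : yd 0 * (1 + bet 0) = yb 0 * bet 0)
    (h1 : ∀ n, yb n * Lp n = yd n * del n + yb (n + 1) * lam n + yd (n + 1) * kap n)
    (h2 : ∀ n, yd (n + 1) * Mp (n + 1)
      = yb (n + 1) * bet (n + 1) + yd n * mu (n + 1) + yb n * nu (n + 1)) :
    (∀ n, yd n < yb n) ∧ (∀ n, yb n < yb (n + 1)) ∧ StrictMono yb := by
  have key : ∀ n, yd n < yb n → yd (n + 1) < yb (n + 1) := by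
    intro n hn
    by_contra h
    push_neg at h
    have e1 := h1 n
    have e2 := h2 n
    rw [hLp] at e1
    rw [hMp] at e2
    have hμ := hmu (n + 1) (by omega)
    have hν := hnu (n + 1) (by omega)
    have hβ := hbet (n + 1)
    have ha := hybpos n
    have hb := hybpos (n + 1)
    have hd := hydpos n
    have he := hydpos (n + 1)
    -- e(1+μ+ν) ≤ dμ + aν < a(μ+ν), so e < a, and b ≤ e < a
    have hea : yd (n + 1) < yb n := by nlinarith [mul_nonneg hβ.le (sub_nonneg.mpr h)]
    have hba : yb (n + 1) < yb n := lt_of_le_of_lt h hea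
    nlinarith [hlam n, hkap n, hdel n, mul_pos (hdel n) (sub_pos.mpr hn),
      mul_pos (hlam n) (sub_pos.mpr hba), mul_pos (hkap n) (sub_pos.mpr hea)]
  have hd : ∀ n, yd n < yb n := by
    intro n
    induction n with
    | zero => nlinarith [hbet 0, hybpos 0, hydpos 0]
    | succ k ih => exact key k ih
  have hinc : ∀ n, yb n < yb (n + 1) := by
    intro n
    by_contra h
    push_neg at h
    have e1 := h1 n
    rw [hLp] at e1
    have := hd n
    have := hd (n + 1)
    nlinarith [hybpos n, hlam n, hkap n, hdel n,
      mul_pos (hdel n) (sub_pos.mpr (hd n)),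
      mul_pos (hkap n) (sub_pos.mpr (hd (n + 1)))]
  exact ⟨hd, hinc, strictMono_nat_of_lt_succ hinc⟩
end

section
/- Under the hypotheses of the previous monotonicity lemma (strictly positive solution of Qy = y for the one-sided alternating process with y(0,d)(1+β_0) = y(0,b)β_0), with D_n = (δ_n M⁺_{n+1} + μ_{n+1}κ_n)/(λ_n M⁺_{n+1} + β_{n+1}κ_n) and E_n = ((1+λ_n)M⁺_{n+1} + (1+β_{n+1})κ_n)/(λ_n M⁺_{n+1} + β_{n+1}κ_n), the following bounds hold for all n ≥ 0: y(0,b)·∏_{k=0}^{n} E_k < y(n+1,b) < y(0,b)·∏_{k=0}^{n}(E_k + D_k). Equivalently with y(0,b)=1: ∏_{k=0}^{n} ((1+λ_k)M⁺_{k+1}+(1+β_{k+1})κ_k)/(λ_k M⁺_{k+1}+β_{k+1}κ_k) < y(n+1,b) < ∏_{k=0}^{n} ((1+λ_k+δ_k)M⁺_{k+1}+(1+μ_{k+1}+β_{k+1})κ_k)/(λ_k M⁺_{k+1}+β_{k+1}κ_k). -/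
open Finset

theorem stmt_13 (lam kap del mu nu bet : ℕ → ℝ)
    (hlam : ∀ n, 0 < lam n) (hkap : ∀ n, 0 < kap n) (hdel : ∀ n, 0 < del n)
    (hmu : ∀ n, 1 ≤ n → 0 < mu n) (hmu0 : mu 0 = 0)
    (hnu : ∀ n, 1 ≤ n → 0 < nu n) (hnu0 : nu 0 = 0)
    (hbet : ∀ n, 0 < bet n)
    (Lp Mp : ℕ → ℝ)
    (hLp : ∀ n, Lp n = 1 + lam n + kap n + del n)
    (hMp : ∀ n, Mp n = 1 + mu n + nu n + bet n)
    (D E : ℕ → ℝ)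
    (hD : ∀ n, D n = (del n * Mp (n + 1) + mu (n + 1) * kap n) /
      (lam n * Mp (n + 1) + bet (n + 1) * kap n))
    (hE : ∀ n, E n = ((1 + lam n) * Mp (n + 1) + (1 + bet (n + 1)) * kap n) /
      (lam n * Mp (n + 1) + bet (n + 1) * kap n))
    (yb yd : ℕ → ℝ)
    (hybpos : ∀ n, 0 < yb n) (hydpos : ∀ n, 0 < yd n)
    (h0 : yd 0 * (1 + bet 0) = yb 0 * bet 0)
    (h1 : ∀ n, yb n * Lp n = yd n * del n + yb (n + 1) * lam n + yd (n + 1) * kap n)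
    (h2 : ∀ n, yd (n + 1) * Mp (n + 1)
      = yb (n + 1) * bet (n + 1) + yd n * mu (n + 1) + yb n * nu (n + 1)) :
    ∀ n : ℕ,
      yb 0 * ∏ k ∈ range (n + 1), E k < yb (n + 1) ∧
      yb (n + 1) < yb 0 * ∏ k ∈ range (n + 1), (E k + D k) := by

  have hMpos : ∀ n : ℕ, 0 < Mp (n + 1) := by
    intro n
    rw [hMp]
    have := hmu (n + 1) (by omega)
    have := hnu (n + 1) (by omega)
    have := hbet (n + 1)
    linarith
  have hA : ∀ n : ℕ, 0 < lam n * Mp (n + 1) + bet (n + 1) * kap n := by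
    intro n
    exact add_pos (mul_pos (hlam n) (hMpos n)) (mul_pos (hbet (n + 1)) (hkap n))
  have hDpos : ∀ n, 0 < D n := by
    intro n
    rw [hD]
    exact div_pos (add_pos (mul_pos (hdel n) (hMpos n))
      (mul_pos (hmu (n + 1) (by omega)) (hkap n))) (hA n)
  have hEpos : ∀ n, 0 < E n := by
    intro n
    rw [hE]
    exact div_pos (add_pos (mul_pos (by linarith [hlam n]) (hMpos n))
      (mul_pos (by linarith [hbet (n + 1)]) (hkap n))) (hA n)
  have hrec : ∀ n, yb (n + 1) * (lam n * Mp (n + 1) + bet (n + 1) * kap n)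
      = yb n * ((1 + lam n + del n) * Mp (n + 1) + (1 + mu (n + 1) + bet (n + 1)) * kap n)
        - yd n * (del n * Mp (n + 1) + mu (n + 1) * kap n) := by
    intro n
    have e1 := h1 n
    have e2 := h2 n
    simp only [hLp, hMp] at e1 e2 ⊢
    linear_combination (-(1 + mu (n + 1) + nu (n + 1) + bet (n + 1))) * e1 - kap n * e2
  have hrec2 : ∀ n, yb (n + 1) = yb n * (E n + D n) - yd n * D n := by
    intro n
    have hAn := (hA n).ne'
    rw [hE, hD]
    field_simp
    linear_combination hrec n
  have hE1 : ∀ n, 1 < E n := by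
    intro n
    rw [hE, lt_div_iff₀ (hA n)]
    have := hMpos n
    have := hkap n
    nlinarith
  have hlt : ∀ n, yd n < yb n := by
    intro n
    induction n with
    | zero => nlinarith [hbet 0, hydpos 0, hybpos 0]
    | succ n ih =>
      have h := hrec2 n
      have hgrow : yb n < yb (n + 1) := by
        nlinarith [mul_pos (sub_pos.2 ih) (hDpos n), mul_lt_mul_of_pos_left (hE1 n) (hybpos n)]
      have e2 := h2 n
      rw [hMp] at e2
      have hm := hmu (n + 1) (by omega)
      have hn := hnu (n + 1) (by omega)
      have hb := hbet (n + 1)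
      nlinarith [mul_lt_mul_of_pos_right (show yd n < yb (n + 1) by linarith) hm,
        mul_lt_mul_of_pos_right hgrow hn, hybpos (n + 1)]
  intro n
  induction n with
  | zero =>
    rw [prod_range_one, prod_range_one]
    have h := hrec2 0
    constructor
    · nlinarith [mul_pos (sub_pos.2 (hlt 0)) (hDpos 0)]
    · nlinarith [mul_pos (hydpos 0) (hDpos 0)]
  | succ n ih =>
    obtain ⟨ihl, ihr⟩ := ih
    have h := hrec2 (n + 1)
    constructor
    · rw [prod_range_succ, ← mul_assoc]
      have h1' := mul_lt_mul_of_pos_right ihl (hEpos (n + 1))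
      nlinarith [mul_pos (sub_pos.2 (hlt (n + 1))) (hDpos (n + 1))]
    · rw [prod_range_succ, ← mul_assoc]
      have hED : 0 < E (n + 1) + D (n + 1) := by linarith [hEpos (n + 1), hDpos (n + 1)]
      have h2' := mul_lt_mul_of_pos_right ihr hED
      nlinarith [mul_pos (hydpos (n + 1)) (hDpos (n + 1))]
end

section
/- Let (E_n)_{n≥0} be defined by E_n = 1 + (M⁺_{n+1}+κ_n)/(λ_n M⁺_{n+1}+β_{n+1}κ_n) with all rate parameters strictly positive, M⁺_{n+1} = 1+μ_{n+1}+ν_{n+1}+β_{n+1}. If ∑_{n=0}^{∞} (M⁺_{n+1}+κ_n)/(λ_n M⁺_{n+1}+β_{n+1}κ_n) = ∞, then ∏_{k=0}^{n} E_k → ∞ as n → ∞; consequently any strictly positive solution of Reuter's equation for the one-sided alternating process satisfies y(n,b) → ∞, and the process is non-explosive. -/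
open Finset Filter

/-!
Combining the two balance equations of level `n` eliminates `yd (n + 1)` and gives
`yb (n+1) D = yb n (D + M + κ) + (yb n - yd n) (δ M + κ μ)` with `D = λ M + β κ`.
The second balance equation shows that `yd ≤ yb` propagates from level `n` to `n + 1`, and the
boundary equation gives it at level `0`; so `yb (n + 1) ≥ yb n * E n` for all `n`, and
`yb n ≥ yb 0 * ∏ k < n, E k ≥ yb 0 * (1 + ∑ k < n, (E k - 1))`, which diverges.
-/

theorem Finset.one_add_sum_le_prod_one_add {ι R : Type*} [CommSemiring R] [PartialOrder R]
    [IsOrderedRing R] (s : Finset ι) {c : ι → R} (hc : ∀ i ∈ s, 0 ≤ c i) :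
    1 + ∑ i ∈ s, c i ≤ ∏ i ∈ s, (1 + c i) := by
  classical
  induction s using Finset.induction_on with
  | empty => simp
  | insert a s ha ih =>
    have hca : 0 ≤ c a := hc a (mem_insert_self a s)
    have hcs : 0 ≤ ∑ i ∈ s, c i := sum_nonneg fun i hi => hc i (mem_insert_of_mem hi)
    rw [sum_insert ha, prod_insert ha]
    calc 1 + (c a + ∑ i ∈ s, c i)
        ≤ 1 + (c a + ∑ i ∈ s, c i) + c a * ∑ i ∈ s, c i := le_add_of_nonneg_right (mul_nonneg hca hcs)
      _ = (1 + c a) * (1 + ∑ i ∈ s, c i) := by ring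
      _ ≤ (1 + c a) * ∏ i ∈ s, (1 + c i) :=
          mul_le_mul_of_nonneg_left (ih fun i hi => hc i (mem_insert_of_mem hi))
            (add_nonneg zero_le_one hca)

theorem tendsto_prod_range_one_add_atTop_of_not_summable {c : ℕ → ℝ} (hc : ∀ n, 0 ≤ c n)
    (h : ¬Summable c) : Tendsto (fun n => ∏ k ∈ range n, (1 + c k)) atTop atTop :=
  tendsto_atTop_mono (fun _ => one_add_sum_le_prod_one_add _ fun k _ => hc k)
    (tendsto_atTop_add_const_left _ 1 ((not_summable_iff_tendsto_nat_atTop_of_nonneg hc).mp h))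

theorem mul_prod_range_le_of_mul_le_succ {R : Type*} [CommSemiring R] [PartialOrder R]
    [IsOrderedRing R] {a E : ℕ → R} (hE : ∀ n, 0 ≤ E n) (h : ∀ n, a n * E n ≤ a (n + 1))
    (n : ℕ) : a 0 * ∏ k ∈ range n, E k ≤ a n := by
  induction n with
  | zero => simp
  | succ n ih =>
    rw [prod_range_succ, ← mul_assoc]
    exact (mul_le_mul_of_nonneg_right ih (hE n)).trans (h n)

section Balance

variable {l k δ m ν β M b₀ b₁ d₀ d₁ : ℝ}

theorem add_div_mul_add_mul_nonneg (hl : 0 ≤ l) (hk : 0 ≤ k) (hm : 0 ≤ m) (hν : 0 ≤ ν)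
    (hβ : 0 ≤ β) (hM : M = 1 + m + ν + β) : 0 ≤ (M + k) / (l * M + β * k) := by
  have hM₀ : 0 ≤ M := by rw [hM]; linarith
  exact div_nonneg (add_nonneg hM₀ hk) (add_nonneg (mul_nonneg hl hM₀) (mul_nonneg hβ hk))

theorem balance_identity (hM : M = 1 + m + ν + β)
    (hb : b₀ * (1 + l + k + δ) = d₀ * δ + b₁ * l + d₁ * k)
    (hd : d₁ * M = b₁ * β + d₀ * m + b₀ * ν) :
    b₁ * (l * M + β * k) = b₀ * (l * M + β * k + (M + k)) + (b₀ - d₀) * (δ * M + k * m) := by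
  subst hM
  linear_combination (-(1 + m + ν + β)) * hb - k * hd

theorem mul_one_add_div_le_of_balance (hl : 0 < l) (hk : 0 ≤ k) (hδ : 0 ≤ δ) (hm : 0 ≤ m)
    (hν : 0 ≤ ν) (hβ : 0 ≤ β) (hM : M = 1 + m + ν + β)
    (hb : b₀ * (1 + l + k + δ) = d₀ * δ + b₁ * l + d₁ * k)
    (hd : d₁ * M = b₁ * β + d₀ * m + b₀ * ν) (hdb : d₀ ≤ b₀) :
    b₀ * (1 + (M + k) / (l * M + β * k)) ≤ b₁ := by
  have hM₀ : 0 < M := by rw [hM]; linarith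
  have hD : 0 < l * M + β * k := add_pos_of_pos_of_nonneg (mul_pos hl hM₀) (mul_nonneg hβ hk)
  have hgap : 0 ≤ (b₀ - d₀) * (δ * M + k * m) :=
    mul_nonneg (sub_nonneg.2 hdb) (add_nonneg (mul_nonneg hδ hM₀.le) (mul_nonneg hk hm))
  have hsplit : b₀ * (1 + (M + k) / (l * M + β * k))
      = b₀ * (l * M + β * k + (M + k)) / (l * M + β * k) := by field_simp
  rw [hsplit, div_le_iff₀ hD, balance_identity hM hb hd]
  linarith

theorem le_of_balance (hm : 0 ≤ m) (hν : 0 ≤ ν) (hβ : 0 ≤ β) (hM : M = 1 + m + ν + β)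
    (hd : d₁ * M = b₁ * β + d₀ * m + b₀ * ν) (hdb : d₀ ≤ b₀) (hb₀ : 0 ≤ b₀) (hb₀₁ : b₀ ≤ b₁) :
    d₁ ≤ b₁ := by
  have hM₀ : 0 < M := by rw [hM]; linarith
  refine le_of_mul_le_mul_right ?_ hM₀
  rw [hd, hM]
  nlinarith [mul_le_mul_of_nonneg_right (hdb.trans hb₀₁) hm, mul_le_mul_of_nonneg_right hb₀₁ hν]

end Balance

theorem mul_one_add_div_le_succ_of_balance {lam kap del mu nu bet Lp Mp yb yd : ℕ → ℝ}
    (hlam : ∀ n, 0 < lam n) (hkap : ∀ n, 0 ≤ kap n) (hdel : ∀ n, 0 ≤ del n)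
    (hmu : ∀ n, 0 ≤ mu (n + 1)) (hnu : ∀ n, 0 ≤ nu (n + 1)) (hbet : ∀ n, 0 ≤ bet n)
    (hLp : ∀ n, Lp n = 1 + lam n + kap n + del n) (hMp : ∀ n, Mp n = 1 + mu n + nu n + bet n)
    (hyb : ∀ n, 0 ≤ yb n) (h0 : yd 0 * (1 + bet 0) = yb 0 * bet 0)
    (hb : ∀ n, yb n * Lp n = yd n * del n + yb (n + 1) * lam n + yd (n + 1) * kap n)
    (hd : ∀ n, yd (n + 1) * Mp (n + 1)
      = yb (n + 1) * bet (n + 1) + yd n * mu (n + 1) + yb n * nu (n + 1)) (n : ℕ) :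
    yb n * (1 + (Mp (n + 1) + kap n) / (lam n * Mp (n + 1) + bet (n + 1) * kap n))
      ≤ yb (n + 1) := by
  have step : ∀ n, yd n ≤ yb n →
      yb n * (1 + (Mp (n + 1) + kap n) / (lam n * Mp (n + 1) + bet (n + 1) * kap n))
        ≤ yb (n + 1) := fun n =>
    mul_one_add_div_le_of_balance (hlam n) (hkap n) (hdel n) (hmu n) (hnu n) (hbet _) (hMp _)
      (hLp n ▸ hb n) (hd n)
  have dom : ∀ n, yd n ≤ yb n := by
    intro n
    induction n with
    | zero => nlinarith [hyb 0, hbet 0]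
    | succ n ih =>
      have hr := add_div_mul_add_mul_nonneg (hlam n).le (hkap n) (hmu n) (hnu n) (hbet _) (hMp _)
      exact le_of_balance (hmu n) (hnu n) (hbet _) (hMp _) (hd n) ih (hyb n)
        ((le_mul_of_one_le_right (hyb n) (le_add_of_nonneg_right hr)).trans (step n ih))
  exact step n (dom n)

theorem stmt_14_general (lam kap del mu nu bet : ℕ → ℝ)
    (hlam : ∀ n, 0 < lam n) (hkap : ∀ n, 0 < kap n) (hdel : ∀ n, 0 < del n)
    (hmu : ∀ n, 1 ≤ n → 0 < mu n)
    (hnu : ∀ n, 1 ≤ n → 0 < nu n)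
    (hbet : ∀ n, 0 < bet n)
    (Lp Mp : ℕ → ℝ)
    (hLp : ∀ n, Lp n = 1 + lam n + kap n + del n)
    (hMp : ∀ n, Mp n = 1 + mu n + nu n + bet n)
    (E : ℕ → ℝ)
    (hE : ∀ n, E n = 1 + (Mp (n + 1) + kap n) /
      (lam n * Mp (n + 1) + bet (n + 1) * kap n))
    (hdiv : ¬ Summable (fun n : ℕ =>
      (Mp (n + 1) + kap n) / (lam n * Mp (n + 1) + bet (n + 1) * kap n))) :
    Filter.Tendsto (fun n : ℕ => ∏ k ∈ range (n + 1), E k) Filter.atTop Filter.atTop ∧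
    ∀ yb yd : ℕ → ℝ, (∀ n, 0 < yb n) → (∀ n, 0 < yd n) →
      yd 0 * (1 + bet 0) = yb 0 * bet 0 →
      (∀ n, yb n * Lp n = yd n * del n + yb (n + 1) * lam n + yd (n + 1) * kap n) →
      (∀ n, yd (n + 1) * Mp (n + 1)
        = yb (n + 1) * bet (n + 1) + yd n * mu (n + 1) + yb n * nu (n + 1)) →
      Filter.Tendsto yb Filter.atTop Filter.atTop := by
  obtain rfl := funext hE
  have hmu' : ∀ n, 0 ≤ mu (n + 1) := fun n => (hmu (n + 1) n.succ_pos).le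
  have hnu' : ∀ n, 0 ≤ nu (n + 1) := fun n => (hnu (n + 1) n.succ_pos).le
  have hc : ∀ n, 0 ≤ (Mp (n + 1) + kap n) / (lam n * Mp (n + 1) + bet (n + 1) * kap n) :=
    fun n => add_div_mul_add_mul_nonneg (hlam n).le (hkap n).le (hmu' n) (hnu' n) (hbet _).le (hMp _)
  have hprod := tendsto_prod_range_one_add_atTop_of_not_summable hc hdiv
  refine ⟨hprod.comp (tendsto_add_atTop_nat 1), fun yb yd hyb _ h0 hb hd => ?_⟩
  have hgrowth := mul_one_add_div_le_succ_of_balance hlam (fun n => (hkap n).le)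
    (fun n => (hdel n).le) hmu' hnu' (fun n => (hbet n).le) hLp hMp (fun n => (hyb n).le) h0 hb hd
  exact tendsto_atTop_mono
    (mul_prod_range_le_of_mul_le_succ (fun n => add_nonneg zero_le_one (hc n)) hgrowth)
    (hprod.const_mul_atTop (hyb 0))

theorem stmt_14 (lam kap del mu nu bet : ℕ → ℝ)
    (hlam : ∀ n, 0 < lam n) (hkap : ∀ n, 0 < kap n) (hdel : ∀ n, 0 < del n)
    (hmu : ∀ n, 1 ≤ n → 0 < mu n) (hmu0 : mu 0 = 0)
    (hnu : ∀ n, 1 ≤ n → 0 < nu n) (hnu0 : nu 0 = 0)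
    (hbet : ∀ n, 0 < bet n)
    (Lp Mp : ℕ → ℝ)
    (hLp : ∀ n, Lp n = 1 + lam n + kap n + del n)
    (hMp : ∀ n, Mp n = 1 + mu n + nu n + bet n)
    (E : ℕ → ℝ)
    (hE : ∀ n, E n = 1 + (Mp (n + 1) + kap n) /
      (lam n * Mp (n + 1) + bet (n + 1) * kap n))
    (hdiv : ¬ Summable (fun n : ℕ =>
      (Mp (n + 1) + kap n) / (lam n * Mp (n + 1) + bet (n + 1) * kap n))) :
    Filter.Tendsto (fun n : ℕ => ∏ k ∈ range (n + 1), E k) Filter.atTop Filter.atTop ∧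
    ∀ yb yd : ℕ → ℝ, (∀ n, 0 < yb n) → (∀ n, 0 < yd n) →
      yd 0 * (1 + bet 0) = yb 0 * bet 0 →
      (∀ n, yb n * Lp n = yd n * del n + yb (n + 1) * lam n + yd (n + 1) * kap n) →
      (∀ n, yd (n + 1) * Mp (n + 1)
        = yb (n + 1) * bet (n + 1) + yd n * mu (n + 1) + yb n * nu (n + 1)) →
      Filter.Tendsto yb Filter.atTop Filter.atTop :=
  stmt_14_general lam kap del mu nu bet hlam hkap hdel hmu hnu hbet Lp Mp hLp hMp E hE hdiv
end

section
/- Let λ_n, κ_n, δ_n, μ_n, ν_n, β_n > 0 for n ∈ ℤ, Λ⁺_n = 1+λ_n+κ_n+δ_n, M⁺_n = 1+μ_n+ν_n+β_n. Suppose (y(n,b), y(n,d))_{n∈ℤ} is a strictly positive solution of the two-sided Reuter equations y(n,b)Λ⁺_n = y(n,d)δ_n + y(n+1,b)λ_n + y(n+1,d)κ_n and y(n,d)M⁺_n = y(n,b)β_n + y(n-1,d)μ_n + y(n-1,b)ν_n for all n ∈ ℤ. If y(0,d) ≥ y(0,b), then the sequence (y(-n,d))_{n≥0} is strictly increasing in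 n and y(-n,d) > y(-n,b) for all n ≥ 1. -/
theorem stmt_16 (lam kap del mu nu bet : ℤ → ℝ)
    (hlam : ∀ n, 0 < lam n) (hkap : ∀ n, 0 < kap n) (hdel : ∀ n, 0 < del n)
    (hmu : ∀ n, 0 < mu n) (hnu : ∀ n, 0 < nu n) (hbet : ∀ n, 0 < bet n)
    (Lp Mp : ℤ → ℝ)
    (hLp : ∀ n, Lp n = 1 + lam n + kap n + del n)
    (hMp : ∀ n, Mp n = 1 + mu n + nu n + bet n)
    (yb yd : ℤ → ℝ)
    (hybpos : ∀ n, 0 < yb n) (hydpos : ∀ n, 0 < yd n)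
    (h1 : ∀ n : ℤ, yb n * Lp n = yd n * del n + yb (n + 1) * lam n + yd (n + 1) * kap n)
    (h2 : ∀ n : ℤ, yd n * Mp n = yb n * bet n + yd (n - 1) * mu n + yb (n - 1) * nu n)
    (hanchor : yb 0 ≤ yd 0) :
    (∀ n : ℕ, yd (-(n : ℤ)) < yd (-(n : ℤ) - 1)) ∧
    (∀ n : ℕ, 1 ≤ n → yb (-(n : ℤ)) < yd (-(n : ℤ))) := by
  have key : ∀ m : ℤ, yb m ≤ yd m →
      yb (m - 1) < yd (m - 1) ∧ yd m < yd (m - 1) := by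
    intro m hm
    have e2 := h2 m
    rw [hMp m] at e2
    -- Step 1
    have hA : yd m * (mu m + nu m) < yd (m - 1) * mu m + yb (m - 1) * nu m := by
      have hβ : yb m * bet m ≤ yd m * bet m :=
        mul_le_mul_of_nonneg_right hm (hbet m).le
      nlinarith [hydpos m]
    -- Step 2
    have hb : yb (m - 1) < yd (m - 1) := by
      by_contra hnot
      push_neg at hnot
      have e1 := h1 (m - 1)
      rw [hLp (m - 1), show m - 1 + 1 = m by ring] at e1
      have hδ : yd (m - 1) * del (m - 1) ≤ yb (m - 1) * del (m - 1) :=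
        mul_le_mul_of_nonneg_right hnot (hdel (m - 1)).le
      have hLm : yb m * lam (m - 1) ≤ yd m * lam (m - 1) :=
        mul_le_mul_of_nonneg_right hm (hlam (m - 1)).le
      have hbm : yb (m - 1) < yd m := by
        nlinarith [hybpos (m - 1), hlam (m - 1), hkap (m - 1)]
      have h3 : yd (m - 1) * mu m ≤ yb (m - 1) * mu m :=
        mul_le_mul_of_nonneg_right hnot (hmu m).le
      nlinarith [hmu m, hnu m]
    refine ⟨hb, ?_⟩
    have h4 : yd (m - 1) * mu m + yb (m - 1) * nu m < yd (m - 1) * (mu m + nu m) := by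
      nlinarith [hnu m]
    have := hA.trans h4
    exact lt_of_mul_lt_mul_right this (by have := hmu m; have := hnu m; linarith)
  have hle : ∀ n : ℕ, yb (-(n : ℤ)) ≤ yd (-(n : ℤ)) := by
    intro n
    induction n with
    | zero => simpa using hanchor
    | succ k ih =>
      have := (key (-(k : ℤ)) ih).1
      have hcast : (-(((k : ℕ) + 1 : ℕ)) : ℤ) = -(k : ℤ) - 1 := by push_cast; ring
      rw [hcast]
      exact this.le
  constructor
  · intro n
    exact (key (-(n : ℤ)) (hle n)).2
  · intro n hn
    obtain ⟨k, rfl⟩ := Nat.exists_eq_add_of_le hn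
    have := (key (-(k : ℤ)) (hle k)).1
    have hcast : (-((1 + k : ℕ)) : ℤ) = -(k : ℤ) - 1 := by push_cast; ring
    rw [hcast]
    exact this
end

section
/- Let λ_n, κ_n, δ_n, μ_n, ν_n, β_n > 0, M⁺_n = 1+μ_n+ν_n+β_n, and suppose y is a strictly positive solution of the one-sided Reuter equations with y(0,d)(1+β_0) = y(0,b)β_0. Then y(1,d) − y(0,d) = y(0,d)·(1/M⁺_1)·((1/β_0)·((D_0+E_0)β_1 + ν_1) + [β_1 M⁺_1 + β_1 κ_0)/(λ_0 M⁺_1 + β_1 κ_0) − 1]), where D_0, E_0 are as in the explosion analysis; in particular, if λ_0 ≤ β_1 then y(1,d) > y(0,d). -/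
theorem stmt_18 (lam kap del mu nu bet : ℕ → ℝ)
    (hlam : ∀ n, 0 < lam n) (hkap : ∀ n, 0 < kap n) (hdel : ∀ n, 0 < del n)
    (hmu : ∀ n, 1 ≤ n → 0 < mu n) (hmu0 : mu 0 = 0)
    (hnu : ∀ n, 1 ≤ n → 0 < nu n) (hnu0 : nu 0 = 0)
    (hbet : ∀ n, 0 < bet n)
    (Lp Mp : ℕ → ℝ)
    (hLp : ∀ n, Lp n = 1 + lam n + kap n + del n)
    (hMp : ∀ n, Mp n = 1 + mu n + nu n + bet n)
    (D E : ℕ → ℝ)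
    (hD : ∀ n, D n = (del n * Mp (n + 1) + mu (n + 1) * kap n) /
      (lam n * Mp (n + 1) + bet (n + 1) * kap n))
    (hE : ∀ n, E n = ((1 + lam n) * Mp (n + 1) + (1 + bet (n + 1)) * kap n) /
      (lam n * Mp (n + 1) + bet (n + 1) * kap n))
    (yb yd : ℕ → ℝ)
    (hybpos : ∀ n, 0 < yb n) (hydpos : ∀ n, 0 < yd n)
    (h0 : yd 0 * (1 + bet 0) = yb 0 * bet 0)
    (h1 : ∀ n, yb n * Lp n = yd n * del n + yb (n + 1) * lam n + yd (n + 1) * kap n)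
    (h2 : ∀ n, yd (n + 1) * Mp (n + 1)
      = yb (n + 1) * bet (n + 1) + yd n * mu (n + 1) + yb n * nu (n + 1)) :
    (yd 1 - yd 0 = yd 0 * (1 / Mp 1) *
      ((1 / bet 0) * ((D 0 + E 0) * bet 1 + nu 1) +
        ((bet 1 * Mp 1 + bet 1 * kap 0) / (lam 0 * Mp 1 + bet 1 * kap 0) - 1))) ∧
    (lam 0 ≤ bet 1 → yd 0 < yd 1) := by

  have hQ : 0 < lam 0 * Mp 1 + bet 1 * kap 0 := by
    have hM1 : 0 < Mp 1 := by
      rw [hMp 1]; have := hmu 1 le_rfl; have := hnu 1 le_rfl; have := hbet 1; linarith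
    have := mul_pos (hlam 0) hM1
    have := mul_pos (hbet 1) (hkap 0)
    linarith
  have hM1 : 0 < Mp 1 := by
    rw [hMp 1]; have := hmu 1 le_rfl; have := hnu 1 le_rfl; have := hbet 1; linarith
  have key : yd 1 * (lam 0 * Mp 1 + bet 1 * kap 0)
      = yb 0 * (bet 1 * Lp 0 + lam 0 * nu 1) + yd 0 * (lam 0 * mu 1 - bet 1 * del 0) := by
    have e1 := h1 0
    have e2 := h2 0
    simp only [Nat.zero_add] at e1 e2
    linear_combination lam 0 * e2 - bet 1 * e1
  have hyb0 : yb 0 = yd 0 * (1 + bet 0) / bet 0 := by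
    rw [eq_div_iff (hbet 0).ne']; linarith [h0]
  have hyd1 : yd 1 = (yd 0 * (1 + bet 0) / bet 0 * (bet 1 * Lp 0 + lam 0 * nu 1)
      + yd 0 * (lam 0 * mu 1 - bet 1 * del 0)) / (lam 0 * Mp 1 + bet 1 * kap 0) := by
    rw [eq_div_iff hQ.ne', ← hyb0]; exact key
  have hpos : bet 0 * (lam 0 * Mp 1 + bet 1 * kap 0) * (yd 1 - yd 0)
      = yd 0 * (bet 1 * Lp 0 + lam 0 * nu 1 + bet 0 * (bet 1 - lam 0)) := by
    have hQe : lam 0 * (1 + mu 1 + nu 1 + bet 1) + bet 1 * kap 0 ≠ 0 := by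
      rw [← hMp 1]; exact hQ.ne'
    rw [hyd1, hLp 0, hMp 1]
    field_simp [(hbet 0).ne', hQe]
    ring
  constructor
  · rw [hyd1, hD 0, hE 0]
    simp only [Nat.zero_add]
    rw [hLp 0, hMp 1]
    have hb0 := (hbet 0).ne'
    have hM1' : (1 : ℝ) + mu 1 + nu 1 + bet 1 ≠ 0 := by rw [← hMp 1]; exact hM1.ne'
    have hQ' : lam 0 * (1 + mu 1 + nu 1 + bet 1) + bet 1 * kap 0 ≠ 0 := by
      rw [← hMp 1]; exact hQ.ne'
    field_simp [hb0, hM1', hQ']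
    ring
  · intro hle
    have hR : 0 < yd 0 * (bet 1 * Lp 0 + lam 0 * nu 1 + bet 0 * (bet 1 - lam 0)) := by
      have h1' : 0 < bet 1 * Lp 0 := by
        have : 0 < Lp 0 := by rw [hLp 0]; have := hlam 0; have := hkap 0; have := hdel 0; linarith
        exact mul_pos (hbet 1) this
      have h2' : 0 < lam 0 * nu 1 := mul_pos (hlam 0) (hnu 1 le_rfl)
      have h3' : 0 ≤ bet 0 * (bet 1 - lam 0) := mul_nonneg (hbet 0).le (by linarith)
      have := hydpos 0
      nlinarith
    have hbq : 0 < bet 0 * (lam 0 * Mp 1 + bet 1 * kap 0) := mul_pos (hbet 0) hQ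
    nlinarith [hpos, hR, hbq]
end
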